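/- In the two-signal game specified in the context: (i) θ' ≿_{s''} θ''; and (ii) the pooling profile π* with π₁*(s'|θ') = π₁*(s'|θ'') = 1, π₂*(a'|s') = 1, π₂*(a''|s'') = 1 passes the Intuitive Criterion but is not a rationality-compatible equilibrium (RCE). -/

import Mathlib

open scoped Classical
open Finset Filter

noncomputable section

/-- `p` is a probability distribution on the finite type `X`. -/
def IsDist {X : Type*} [Fintype X] (p : X → ℝ) : Prop :=
  (∀ x, 0 ≤ p x) ∧ ∑ x, p x = 1

variable {Θ S A : Type*} [Fintype Θ] [Fintype S] [Fintype A]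

/-- Sender's expected payoff `u₁(θ, s, π₂(·|s))` from signal `s` when the receiver plays `π₂`. -/
def u1R (u₁ : Θ → S → A → ℝ) (π₂ : S → A → ℝ) (θ : Θ) (s : S) : ℝ :=
  ∑ a, π₂ s a * u₁ θ s a

/-- Receiver's expected payoff of action `a` after signal `s` under belief `p`. -/
def expU2 (u₂ : Θ → S → A → ℝ) (p : Θ → ℝ) (s : S) (a : A) : ℝ :=
  ∑ θ, p θ * u₂ θ s a

/-- `BR(p, s)`: pure best responses to belief `p` after signal `s`. -/
def BRb (u₂ : Θ → S → A → ℝ) (p : Θ → ℝ) (s : S) : Set A :=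
  {a | ∀ a', expU2 u₂ p s a' ≤ expU2 u₂ p s a}

/-- `A_s^BR`: actions that best respond to some belief after `s`. -/
def ABR (u₂ : Θ → S → A → ℝ) (s : S) : Set A :=
  {a | ∃ p, IsDist p ∧ a ∈ BRb u₂ p s}

/-- Membership in `Π₂•`: a receiver behavior strategy supported on `A_s^BR` after every `s`. -/
def Rational2 (u₂ : Θ → S → A → ℝ) (π₂ : S → A → ℝ) : Prop :=
  (∀ s, IsDist (π₂ s)) ∧ ∀ s a, π₂ s a ≠ 0 → a ∈ ABR u₂ s

/-- `u₁(θ,s,π₂(·|s)) ≥ max_{s' ≠ s} u₁(θ,s',π₂(·|s'))`. -/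
def WeakBest (u₁ : Θ → S → A → ℝ) (π₂ : S → A → ℝ) (θ : Θ) (s : S) : Prop :=
  ∀ s', s' ≠ s → u1R u₁ π₂ θ s' ≤ u1R u₁ π₂ θ s

/-- `u₁(θ,s,π₂(·|s)) > max_{s' ≠ s} u₁(θ,s',π₂(·|s'))`. -/
def StrictBest (u₁ : Θ → S → A → ℝ) (π₂ : S → A → ℝ) (θ : Θ) (s : S) : Prop :=
  ∀ s', s' ≠ s → u1R u₁ π₂ θ s' < u1R u₁ π₂ θ s

/-- `θ' ≿_s θ''`: `s` is more rationally-compatible with `θ'` than with `θ''`. -/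
def MoreCompat (u₁ u₂ : Θ → S → A → ℝ) (s : S) (θ' θ'' : Θ) : Prop :=
  ∀ π₂, Rational2 u₂ π₂ → WeakBest u₁ π₂ θ'' s → StrictBest u₁ π₂ θ' s

/-- `s` maximizes `s' ↦ u₁(θ, s', π₂(·|s'))`. -/
def GlobalBest (u₁ : Θ → S → A → ℝ) (π₂ : S → A → ℝ) (θ : Θ) (s : S) : Prop :=
  ∀ s', u1R u₁ π₂ θ s' ≤ u1R u₁ π₂ θ s

/-- `S_θ`: signals that best respond to some (not necessarily rational) receiver strategy. -/
def Sθ (u₁ : Θ → S → A → ℝ) (θ : Θ) : Set S :=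
  {s | ∃ π₂ : S → A → ℝ, (∀ s', IsDist (π₂ s')) ∧ GlobalBest u₁ π₂ θ s}

/-- `Θ_s`: types for which `s` is not dominated. -/
def Θtypes (u₁ : Θ → S → A → ℝ) (s : S) : Set Θ := {θ | s ∈ Sθ u₁ θ}

/-- Membership in `Π₁•`. -/
def Rational1 (u₁ : Θ → S → A → ℝ) (π₁ : Θ → S → ℝ) : Prop :=
  (∀ θ, IsDist (π₁ θ)) ∧ ∀ θ s, π₁ θ s ≠ 0 → s ∈ Sθ u₁ θ

/-- Nash equilibrium of the signaling game. -/
def NashEq (lam : Θ → ℝ) (u₁ u₂ : Θ → S → A → ℝ)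
    (π₁ : Θ → S → ℝ) (π₂ : S → A → ℝ) : Prop :=
  (∀ θ, IsDist (π₁ θ)) ∧ (∀ s, IsDist (π₂ s)) ∧
  (∀ θ s, π₁ θ s ≠ 0 → GlobalBest u₁ π₂ θ s) ∧
  (∀ s, (∃ θ, π₁ θ s ≠ 0) → ∀ a, π₂ s a ≠ 0 →
    ∀ a', ∑ θ, lam θ * π₁ θ s * u₂ θ s a' ≤ ∑ θ, lam θ * π₁ θ s * u₂ θ s a)

/-- Equilibrium expected payoff `E_π[u₁ | θ]`. -/
def eqPayoff (u₁ : Θ → S → A → ℝ) (π₁ : Θ → S → ℝ) (π₂ : S → A → ℝ) (θ : Θ) : ℝ :=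
  ∑ s, π₁ θ s * u1R u₁ π₂ θ s

/-- `s` is off the path of play of `π₁`. -/
def OffPath (π₁ : Θ → S → ℝ) (s : S) : Prop := ∀ θ, π₁ θ s = 0

/-- `J̃(s, π)`: types for which some best response to `s` weakly improves on the equilibrium. -/
def Jt (u₁ u₂ : Θ → S → A → ℝ) (π₁ : Θ → S → ℝ) (π₂ : S → A → ℝ) (s : S) : Set Θ :=
  {θ | ∃ a ∈ ABR u₂ s, eqPayoff u₁ π₁ π₂ θ ≤ u₁ θ s a}

/-- The odds-ratio condition defining `P_{θ'▷θ''}`. -/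
def OddsLe (lam : Θ → ℝ) (θ' θ'' : Θ) (p : Θ → ℝ) : Prop :=
  p θ'' * lam θ' ≤ lam θ'' * p θ'

/-- `Δ(T)`: beliefs supported on `T`. -/
def DeltaOn {Θ : Type*} [Fintype Θ] (T : Set Θ) : Set (Θ → ℝ) :=
  {p | IsDist p ∧ ∀ θ ∉ T, p θ = 0}

/-- `P̃(s, π)`: rationality-compatible beliefs at profile `π`. -/
def Pt (lam : Θ → ℝ) (u₁ u₂ : Θ → S → A → ℝ) (π₁ : Θ → S → ℝ) (π₂ : S → A → ℝ)
    (s : S) : Set (Θ → ℝ) :=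
  if (Jt u₁ u₂ π₁ π₂ s).Nonempty then
    DeltaOn (Jt u₁ u₂ π₁ π₂ s) ∩
      {p | ∀ θ' θ'', MoreCompat u₁ u₂ s θ' θ'' → OddsLe lam θ' θ'' p}
  else DeltaOn (Θtypes u₁ s)

/-- Rationality-compatible equilibrium. -/
def RCE (lam : Θ → ℝ) (u₁ u₂ : Θ → S → A → ℝ)
    (π₁ : Θ → S → ℝ) (π₂ : S → A → ℝ) : Prop :=
  NashEq lam u₁ u₂ π₁ π₂ ∧
  ∀ s a, π₂ s a ≠ 0 → ∃ p ∈ Pt lam u₁ u₂ π₁ π₂ s, a ∈ BRb u₂ p s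

/-- `P̂(s)`: uniformly rationality-compatible beliefs. -/
def Ph (lam : Θ → ℝ) (u₁ u₂ : Θ → S → A → ℝ) (s : S) : Set (Θ → ℝ) :=
  DeltaOn (Θtypes u₁ s) ∩
    {p | ∀ θ' θ'', MoreCompat u₁ u₂ s θ' θ'' → OddsLe lam θ' θ'' p}

/-- Uniform rationality-compatible equilibrium. -/
def URCE (lam : Θ → ℝ) (u₁ u₂ : Θ → S → A → ℝ)
    (π₁ : Θ → S → ℝ) (π₂ : S → A → ℝ) : Prop :=
  NashEq lam u₁ u₂ π₁ π₂ ∧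
  ∀ θ s, OffPath π₁ s → ∀ a, (∃ p ∈ Ph lam u₁ u₂ s, a ∈ BRb u₂ p s) →
    u₁ θ s a ≤ eqPayoff u₁ π₁ π₂ θ

/-- Receiver's expected payoff of a mixed action `α` after `s` under belief `p`. -/
def expU2m (u₂ : Θ → S → A → ℝ) (p : Θ → ℝ) (s : S) (α : A → ℝ) : ℝ :=
  ∑ θ, p θ * ∑ a, α a * u₂ θ s a

/-- `MBR(p, s)`: mixed best responses to belief `p` after `s`. -/
def MBRb (u₂ : Θ → S → A → ℝ) (p : Θ → ℝ) (s : S) : Set (A → ℝ) :=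
  {α | IsDist α ∧ ∀ α', IsDist α' → expU2m u₂ p s α' ≤ expU2m u₂ p s α}

/-- `MBR(s)`. -/
def MBR (u₂ : Θ → S → A → ℝ) (s : S) : Set (A → ℝ) :=
  {α | ∃ p, IsDist p ∧ α ∈ MBRb u₂ p s}

/-- `u₁(θ, s, α)` for a mixed action `α`. -/
def u1m (u₁ : Θ → S → A → ℝ) (θ : Θ) (s : S) (α : A → ℝ) : ℝ :=
  ∑ a, α a * u₁ θ s a

/-- `D(θ, s; π)`. -/
def Dset (u₁ u₂ : Θ → S → A → ℝ) (π₁ : Θ → S → ℝ) (π₂ : S → A → ℝ)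
    (θ : Θ) (s : S) : Set (A → ℝ) :=
  {α | α ∈ MBR u₂ s ∧ eqPayoff u₁ π₁ π₂ θ < u1m u₁ θ s α}

/-- `D°(θ, s; π)`. -/
def D0set (u₁ u₂ : Θ → S → A → ℝ) (π₁ : Θ → S → ℝ) (π₂ : S → A → ℝ)
    (θ : Θ) (s : S) : Set (A → ℝ) :=
  {α | α ∈ MBR u₂ s ∧ eqPayoff u₁ π₁ π₂ θ = u1m u₁ θ s α}

/-! ### The two-signal game (Example: IC but not RCE) -/

/-- Sender types: `t1 = θ'`, `t2 = θ''`. -/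
inductive Ty | t1 | t2
deriving DecidableEq

instance : Fintype Ty :=
  ⟨{Ty.t1, Ty.t2}, fun x => by cases x <;> simp⟩

/-- Signals: `s1 = s'`, `s2 = s''`. -/
inductive Sg | s1 | s2
deriving DecidableEq

instance : Fintype Sg :=
  ⟨{Sg.s1, Sg.s2}, fun x => by cases x <;> simp⟩

/-- Receiver actions: `a1 = a'`, `a2 = a''`. -/
inductive Ac | a1 | a2
deriving DecidableEq

instance : Fintype Ac :=
  ⟨{Ac.a1, Ac.a2}, fun x => by cases x <;> simp⟩

/-- Prior: `λ(θ') = 3/4`, `λ(θ'') = 1/4`. -/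
def lamG : Ty → ℝ
  | .t1 => 3 / 4
  | .t2 => 1 / 4

/-- Sender payoffs. -/
def u1G : Ty → Sg → Ac → ℝ
  | .t1, .s1, .a1 => 4
  | .t1, .s1, .a2 => 0
  | .t2, .s1, .a1 => 6
  | .t2, .s1, .a2 => 2
  | .t1, .s2, .a1 => 7
  | .t1, .s2, .a2 => 3
  | .t2, .s2, .a1 => 7
  | .t2, .s2, .a2 => 3

/-- Receiver payoffs. -/
def u2G : Ty → Sg → Ac → ℝ
  | .t1, .s1, .a1 => 1
  | .t1, .s1, .a2 => 0
  | .t2, .s1, .a1 => 0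
  | .t2, .s1, .a2 => 1
  | .t1, .s2, .a1 => 1
  | .t1, .s2, .a2 => 0
  | .t2, .s2, .a1 => 0
  | .t2, .s2, .a2 => 1

/-- The pooling-on-`s'` profile: both types send `s'`; the receiver plays `a'` after `s'`
and `a''` after `s''`. -/
def pi1G : Ty → Sg → ℝ := fun _ s => if s = Sg.s1 then 1 else 0

def pi2G : Sg → Ac → ℝ
  | .s1, .a1 => 1
  | .s2, .a2 => 1
  | _, _ => 0

/-- `π` passes the Intuitive Criterion. -/
def PassesIC {Θ S A : Type*} [Fintype Θ] [Fintype S] [Fintype A]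
    (u₁ u₂ : Θ → S → A → ℝ) (π₁ : Θ → S → ℝ) (π₂ : S → A → ℝ) : Prop :=
  ¬ ∃ (θ : Θ) (s' : S), (Jt u₁ u₂ π₁ π₂ s').Nonempty ∧
    ∀ a : A, (∃ p ∈ DeltaOn (Jt u₁ u₂ π₁ π₂ s'), a ∈ BRb u₂ p s') →
      eqPayoff u₁ π₁ π₂ θ < u₁ θ s' a

/-!
Under `π*` the types earn `4` (`θ'`) and `6` (`θ''`). Signal `s''` pays both types the same,
while after `s'` type `θ''` gets strictly more than `θ'` whatever the receiver does; hence
whenever `θ''` weakly prefers `s''`, `θ'` strictly does, i.e. `θ' ≿_{s''} θ''`.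
Both types lie in `J̃(s'', π*)`, so `P̃(s'', π*)` only contains beliefs with odds
`p(θ'') / p(θ') ≤ 1/3`, against which `a'` is the unique best response: playing `a''` after
`s''` is not rationality-compatible. The Intuitive Criterion, by contrast, admits the belief
concentrated on `θ''`, which makes `a''` a best response after either signal, and `a''` never
pays a type more than its equilibrium payoff.
-/

section PointMass

variable {X : Type*} [Fintype X] [DecidableEq X]

lemma isDist_single (x : X) : IsDist (Pi.single x (1 : ℝ)) :=
  ⟨fun y => by rw [Pi.single_apply]; split_ifs <;> norm_num, by simp⟩

variable [DecidableEq Θ]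

omit [Fintype S] [Fintype A] in
lemma expU2_single (u₂ : Θ → S → A → ℝ) (θ : Θ) (s : S) (a : A) :
    expU2 u₂ (Pi.single θ 1) s a = u₂ θ s a := by
  simp [expU2, Pi.single_apply]

omit [Fintype S] [Fintype A] in
lemma mem_BRb_single_iff (u₂ : Θ → S → A → ℝ) (θ : Θ) (s : S) (a : A) :
    a ∈ BRb u₂ (Pi.single θ 1) s ↔ ∀ a', u₂ θ s a' ≤ u₂ θ s a := by
  simp only [BRb, Set.mem_ofPred_eq, expU2_single]

omit [Fintype S] [Fintype A] in
lemma mem_ABR_of_forall_le {u₂ : Θ → S → A → ℝ} {s : S} {a : A} (θ : Θ)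
    (h : ∀ a', u₂ θ s a' ≤ u₂ θ s a) : a ∈ ABR u₂ s :=
  ⟨_, isDist_single θ, (mem_BRb_single_iff u₂ θ s a).2 h⟩

end PointMass

lemma deltaOn_univ : DeltaOn (Set.univ : Set Θ) = {p | IsDist p} := by
  ext p; simp [DeltaOn]

omit [Fintype Θ] [Fintype S] in
lemma u1R_lt_u1R_of_forall_lt {u₁ : Θ → S → A → ℝ} {π₂ : S → A → ℝ} {θ θ' : Θ} {s : S}
    (hπ : IsDist (π₂ s)) (h : ∀ a, u₁ θ s a < u₁ θ' s a) :
    u1R u₁ π₂ θ s < u1R u₁ π₂ θ' s := by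
  obtain ⟨a, -, ha⟩ := Finset.exists_lt_of_sum_lt (s := Finset.univ) (f := fun _ => (0 : ℝ))
    (g := π₂ s) (by simp [hπ.2])
  exact Finset.sum_lt_sum (fun b _ => mul_le_mul_of_nonneg_left (h b).le (hπ.1 b))
    ⟨a, Finset.mem_univ a, mul_lt_mul_of_pos_left (h a) ha⟩

omit [Fintype S] in
lemma moreCompat_of_forall_lt {u₁ : Θ → S → A → ℝ} (u₂ : Θ → S → A → ℝ) {s : S} {θ' θ'' : Θ}
    (h_eq : ∀ a, u₁ θ' s a = u₁ θ'' s a) (h_lt : ∀ s' ≠ s, ∀ a, u₁ θ' s' a < u₁ θ'' s' a) :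
    MoreCompat u₁ u₂ s θ' θ'' := by
  intro π₂ hπ₂ hweak s' hs'
  calc u1R u₁ π₂ θ' s' < u1R u₁ π₂ θ'' s' := u1R_lt_u1R_of_forall_lt (hπ₂.1 s') (h_lt s' hs')
    _ ≤ u1R u₁ π₂ θ'' s := hweak s' hs'
    _ = u1R u₁ π₂ θ' s := by simp only [u1R, h_eq]

lemma Pt_eq_of_nonempty {lam : Θ → ℝ} {u₁ u₂ : Θ → S → A → ℝ} {π₁ : Θ → S → ℝ}
    {π₂ : S → A → ℝ} {s : S} (hJ : (Jt u₁ u₂ π₁ π₂ s).Nonempty) :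
    Pt lam u₁ u₂ π₁ π₂ s = DeltaOn (Jt u₁ u₂ π₁ π₂ s) ∩
      {p | ∀ θ' θ'', MoreCompat u₁ u₂ s θ' θ'' → OddsLe lam θ' θ'' p} :=
  if_pos hJ

@[simp] lemma Ty.sum_univ {M : Type*} [AddCommMonoid M] (f : Ty → M) :
    ∑ x, f x = f .t1 + f .t2 :=
  Finset.sum_pair (by decide)

@[simp] lemma Ac.sum_univ {M : Type*} [AddCommMonoid M] (f : Ac → M) :
    ∑ x, f x = f .a1 + f .a2 :=
  Finset.sum_pair (by decide)

lemma ABR_u2G (s : Sg) : ABR u2G s = Set.univ := by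
  refine Set.eq_univ_of_forall fun a => ?_
  cases a
  · exact mem_ABR_of_forall_le .t1 fun a' => by cases s <;> cases a' <;> simp [u2G]
  · exact mem_ABR_of_forall_le .t2 fun a' => by cases s <;> cases a' <;> simp [u2G]

lemma eqPayoff_pooling_t1 : eqPayoff u1G pi1G pi2G .t1 = 4 := by
  simp [eqPayoff, u1R, pi1G, pi2G, u1G]

lemma eqPayoff_pooling_t2 : eqPayoff u1G pi1G pi2G .t2 = 6 := by
  simp [eqPayoff, u1R, pi1G, pi2G, u1G]

lemma Jt_pooling (s : Sg) : Jt u1G u2G pi1G pi2G s = Set.univ := by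
  refine Set.eq_univ_of_forall fun θ => ⟨.a1, by simp [ABR_u2G], ?_⟩
  cases θ <;> cases s <;> norm_num [eqPayoff_pooling_t1, eqPayoff_pooling_t2, u1G]

lemma moreCompat_s2_t1_t2 : MoreCompat u1G u2G .s2 .t1 .t2 :=
  moreCompat_of_forall_lt u2G (fun a => by cases a <;> rfl) fun s' hs' a => by
    obtain rfl : s' = .s1 := by cases s' <;> simp_all
    cases a <;> norm_num [u1G]

lemma passesIC_pooling : PassesIC u1G u2G pi1G pi2G := by
  rintro ⟨θ, s, -, h_dev⟩
  have h_a2 : Ac.a2 ∈ BRb u2G (Pi.single .t2 1) s :=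
    (mem_BRb_single_iff _ _ _ _).2 fun a' => by cases s <;> cases a' <;> simp [u2G]
  have := h_dev .a2 ⟨_, by simpa [Jt_pooling, deltaOn_univ] using isDist_single Ty.t2, h_a2⟩
  cases θ <;> cases s <;> norm_num [eqPayoff_pooling_t1, eqPayoff_pooling_t2, u1G] at this

lemma a2_notMem_BRb_s2 {p : Ty → ℝ} (hp : IsDist p) (h_odds : OddsLe lamG .t1 .t2 p) :
    Ac.a2 ∉ BRb u2G p .s2 := by
  intro h
  have h_a1 := h .a1
  have h_sum := hp.2
  simp only [expU2, Ty.sum_univ, u2G, OddsLe, lamG] at h_a1 h_sum h_odds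
  linarith [hp.1 .t1]

/-- in the two-signal game, (i) `θ' ≿_{s''} θ''`, and (ii) the pooling
profile passes the Intuitive Criterion but is not an RCE. -/
theorem IC_but_not_RCE :
    MoreCompat u1G u2G Sg.s2 Ty.t1 Ty.t2 ∧
    PassesIC u1G u2G pi1G pi2G ∧
    ¬ RCE lamG u1G u2G pi1G pi2G := by
  refine ⟨moreCompat_s2_t1_t2, passesIC_pooling, ?_⟩
  rintro ⟨-, h_belief⟩
  obtain ⟨p, hp, h_br⟩ := h_belief .s2 .a2 (by simp [pi2G])
  rw [Pt_eq_of_nonempty ⟨.t2, by simp [Jt_pooling]⟩] at hp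
  obtain ⟨⟨hp_dist, -⟩, h_odds⟩ := hp
  exact a2_notMem_BRb_s2 hp_dist (h_odds _ _ moreCompat_s2_t1_t2) h_br

end
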